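/- arXiv:2408.07688 — 2 statements merged into one kernel-verified Lean document; each statement's English description precedes it below -/
import Mathlib

section
/- Let l₂ : ℝ^d → ℝ be continuous and satisfy −C₁ + C₂|p|² ≤ l₂(p) ≤ C₁ + C₃|p|² for constants C₁, C₂, C₃ > 0. Then for every P ∈ E = L²((0,1); ℝ^d), one has ∫₀¹ sup_{q ∈ ℝ^d} (q·P(ω) − l₂(q)) dω = sup_{a ∈ E} { ⟨a, P⟩_E − ∫₀¹ l₂(a(ω)) dω }, i.e., the integral of the pointwise convex conjugate equals the convex conjugate of the integral functional on E. -/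
open MeasureTheory

/-- Lebesgue measure on Ω = (0,1). -/
noncomputable def μΩ : Measure ℝ := volume.restrict (Set.Ioo (0:ℝ) 1)

open Filter Topology

instance : IsFiniteMeasure μΩ := by
  constructor
  rw [μΩ, Measure.restrict_apply_univ, Real.volume_Ioo]
  norm_num

variable {d : ℕ}

/-- The pointwise convex conjugate. -/
noncomputable def conj2 (d : ℕ) (l₂ : EuclideanSpace ℝ (Fin d) → ℝ)
    (x : EuclideanSpace ℝ (Fin d)) : ℝ :=
  ⨆ q, (inner (𝕜 := ℝ) q x - l₂ q)

section aux
variable (l₂ : EuclideanSpace ℝ (Fin d) → ℝ) (C₁ C₂ C₃ : ℝ)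

lemma aux_ub (hC₂ : 0 < C₂)
    (hgrowth : ∀ p : EuclideanSpace ℝ (Fin d),
      -C₁ + C₂ * ‖p‖ ^ 2 ≤ l₂ p ∧ l₂ p ≤ C₁ + C₃ * ‖p‖ ^ 2)
    (x q : EuclideanSpace ℝ (Fin d)) :
    inner (𝕜 := ℝ) q x - l₂ q ≤ C₁ + ‖x‖ ^ 2 / (4 * C₂) := by
  have h1 : inner (𝕜 := ℝ) q x ≤ ‖q‖ * ‖x‖ := real_inner_le_norm q x
  have h2 := (hgrowth q).1
  have h3 := sq_nonneg (2 * C₂ * ‖q‖ - ‖x‖)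
  have h4 : 0 < 4 * C₂ := by linarith
  have key : ‖q‖ * ‖x‖ - C₂ * ‖q‖ ^ 2 ≤ ‖x‖ ^ 2 / (4 * C₂) := by
    rw [le_div_iff₀ h4]; nlinarith
  linarith

lemma aux_bdd (hC₂ : 0 < C₂)
    (hgrowth : ∀ p : EuclideanSpace ℝ (Fin d),
      -C₁ + C₂ * ‖p‖ ^ 2 ≤ l₂ p ∧ l₂ p ≤ C₁ + C₃ * ‖p‖ ^ 2)
    (x : EuclideanSpace ℝ (Fin d)) :
    BddAbove (Set.range fun q => inner (𝕜 := ℝ) q x - l₂ q) := by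
  refine ⟨C₁ + ‖x‖ ^ 2 / (4 * C₂), ?_⟩
  rintro y ⟨q, rfl⟩
  exact aux_ub l₂ C₁ C₂ C₃ hC₂ hgrowth x q

lemma conj2_ub (hC₂ : 0 < C₂)
    (hgrowth : ∀ p : EuclideanSpace ℝ (Fin d),
      -C₁ + C₂ * ‖p‖ ^ 2 ≤ l₂ p ∧ l₂ p ≤ C₁ + C₃ * ‖p‖ ^ 2)
    (x : EuclideanSpace ℝ (Fin d)) :
    conj2 d l₂ x ≤ C₁ + ‖x‖ ^ 2 / (4 * C₂) :=
  ciSup_le (aux_ub l₂ C₁ C₂ C₃ hC₂ hgrowth x)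

lemma conj2_lb (hC₂ : 0 < C₂)
    (hgrowth : ∀ p : EuclideanSpace ℝ (Fin d),
      -C₁ + C₂ * ‖p‖ ^ 2 ≤ l₂ p ∧ l₂ p ≤ C₁ + C₃ * ‖p‖ ^ 2)
    (x : EuclideanSpace ℝ (Fin d)) :
    -C₁ ≤ conj2 d l₂ x := by
  have h0 : -C₁ ≤ inner (𝕜 := ℝ) (0 : EuclideanSpace ℝ (Fin d)) x - l₂ 0 := by
    have := (hgrowth 0).2
    simp only [inner_zero_left, norm_zero] at *
    nlinarith
  exact h0.trans (le_ciSup (aux_bdd l₂ C₁ C₂ C₃ hC₂ hgrowth x) 0)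

lemma conj2_eq_iSup_dense (hl₂ : Continuous l₂) (hC₂ : 0 < C₂)
    (hgrowth : ∀ p : EuclideanSpace ℝ (Fin d),
      -C₁ + C₂ * ‖p‖ ^ 2 ≤ l₂ p ∧ l₂ p ≤ C₁ + C₃ * ‖p‖ ^ 2)
    (u : ℕ → EuclideanSpace ℝ (Fin d)) (hu : DenseRange u)
    (x : EuclideanSpace ℝ (Fin d)) :
    conj2 d l₂ x = ⨆ n, (inner (𝕜 := ℝ) (u n) x - l₂ (u n)) := by
  have hb2 : BddAbove (Set.range fun n => inner (𝕜 := ℝ) (u n) x - l₂ (u n)) := by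
    refine ⟨C₁ + ‖x‖ ^ 2 / (4 * C₂), ?_⟩
    rintro y ⟨n, rfl⟩
    exact aux_ub l₂ C₁ C₂ C₃ hC₂ hgrowth x (u n)
  refine le_antisymm (ciSup_le fun q => ?_) (ciSup_le fun n =>
    le_ciSup (aux_bdd l₂ C₁ C₂ C₃ hC₂ hgrowth x) (u n))
  have hcont : Continuous fun p : EuclideanSpace ℝ (Fin d) =>
      inner (𝕜 := ℝ) p x - l₂ p := (continuous_id.inner continuous_const).sub hl₂
  have hmem : inner (𝕜 := ℝ) q x - l₂ q ∈
      closure (Set.range fun n => inner (𝕜 := ℝ) (u n) x - l₂ (u n)) := by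
    refine map_mem_closure (f := fun p : EuclideanSpace ℝ (Fin d) => inner (𝕜 := ℝ) p x - l₂ p) hcont (hu q) ?_
    rintro p ⟨n, rfl⟩
    exact ⟨n, rfl⟩
  have hsub : (Set.range fun n => inner (𝕜 := ℝ) (u n) x - l₂ (u n)) ⊆
      Set.Iic (⨆ n, (inner (𝕜 := ℝ) (u n) x - l₂ (u n))) := by
    rintro y ⟨n, rfl⟩
    exact le_ciSup hb2 n
  exact (isClosed_Iic.closure_subset_iff.mpr hsub) hmem

end aux

/-- For continuous `l₂ : ℝ^d → ℝ` with quadratic growth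
`−C₁ + C₂|p|² ≤ l₂(p) ≤ C₁ + C₃|p|²` (C₁,C₂,C₃ > 0), for every `P ∈ E = L²((0,1);ℝ^d)`,
the integral of the pointwise convex conjugate equals the convex conjugate of the
integral functional on `E`:
`∫₀¹ sup_q (q·P(ω) − l₂(q)) dω = sup_{a ∈ E} (⟨a,P⟩_E − ∫₀¹ l₂(a(ω)) dω)`. -/
theorem integral_sup_eq_sup_integral
    (d : ℕ) (l₂ : EuclideanSpace ℝ (Fin d) → ℝ) (hl₂ : Continuous l₂)
    (C₁ C₂ C₃ : ℝ) (hC₁ : 0 < C₁) (hC₂ : 0 < C₂) (hC₃ : 0 < C₃)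
    (hgrowth : ∀ p : EuclideanSpace ℝ (Fin d),
      -C₁ + C₂ * ‖p‖ ^ 2 ≤ l₂ p ∧ l₂ p ≤ C₁ + C₃ * ‖p‖ ^ 2)
    (P : Lp (EuclideanSpace ℝ (Fin d)) 2 μΩ) :
    (∫ ω, (⨆ q : EuclideanSpace ℝ (Fin d), (inner (𝕜 := ℝ) q (P ω) - l₂ q)) ∂μΩ) =
      ⨆ a : Lp (EuclideanSpace ℝ (Fin d)) 2 μΩ,
        (inner (𝕜 := ℝ) a P - ∫ ω, l₂ (a ω) ∂μΩ) := by
  classical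
  let u : ℕ → EuclideanSpace ℝ (Fin d) := TopologicalSpace.denseSeq _
  have hu : DenseRange u := TopologicalSpace.denseRange_denseSeq _
  have hPm : Measurable (fun ω => (P : ℝ → EuclideanSpace ℝ (Fin d)) ω) :=
    (Lp.stronglyMeasurable P).measurable
  have hP2 : Integrable (fun ω => ‖P ω‖ ^ 2) μΩ :=
    (memLp_two_iff_integrable_sq_norm (Lp.aestronglyMeasurable P)).mp (Lp.memLp P)
  have hPnorm : Integrable (fun ω => ‖P ω‖) μΩ :=
    (MemLp.integrable one_le_two (Lp.memLp P)).norm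
  have hBdd := aux_bdd l₂ C₁ C₂ C₃ hC₂ hgrowth
  have hφmeas : ∀ q : EuclideanSpace ℝ (Fin d),
      Measurable fun ω => inner (𝕜 := ℝ) q (P ω) - l₂ q := fun q =>
    (Measurable.inner measurable_const hPm).sub measurable_const
  have hgP_meas : Measurable fun ω => conj2 d l₂ (P ω) := by
    have heq : (fun ω => conj2 d l₂ (P ω)) =
        fun ω => ⨆ n, (inner (𝕜 := ℝ) (u n) (P ω) - l₂ (u n)) :=
      funext fun ω => conj2_eq_iSup_dense l₂ C₁ C₂ C₃ hl₂ hC₂ hgrowth u hu (P ω)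
    rw [heq]
    exact Measurable.iSup fun n => hφmeas (u n)
  have hgP_int : Integrable (fun ω => conj2 d l₂ (P ω)) μΩ := by
    refine Integrable.mono' ((integrable_const C₁).add (hP2.div_const (4 * C₂)))
      hgP_meas.aestronglyMeasurable (ae_of_all _ fun ω => ?_)
    rw [Real.norm_eq_abs, abs_le]
    have h1 := conj2_ub l₂ C₁ C₂ C₃ hC₂ hgrowth (P ω)
    have h2 := conj2_lb l₂ C₁ C₂ C₃ hC₂ hgrowth (P ω)
    have h3 : 0 ≤ ‖P ω‖ ^ 2 / (4 * C₂) := by positivity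
    constructor <;> simp only [Pi.add_apply] <;> linarith
  have hl2a_int : ∀ a : Lp (EuclideanSpace ℝ (Fin d)) 2 μΩ,
      Integrable (fun ω => l₂ (a ω)) μΩ := by
    intro a
    have ha2 : Integrable (fun ω => ‖a ω‖ ^ 2) μΩ :=
      (memLp_two_iff_integrable_sq_norm (Lp.aestronglyMeasurable a)).mp (Lp.memLp a)
    refine Integrable.mono' ((integrable_const C₁).add (ha2.const_mul C₃))
      (hl₂.comp_aestronglyMeasurable (Lp.aestronglyMeasurable a)) (ae_of_all _ fun ω => ?_)
    rw [Real.norm_eq_abs, abs_le]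
    have h1 := (hgrowth (a ω)).1
    have h2 := (hgrowth (a ω)).2
    have h3 : 0 ≤ ‖a ω‖ ^ 2 := sq_nonneg _
    constructor <;> simp only [Pi.add_apply] <;> nlinarith
  have key : ∀ a : Lp (EuclideanSpace ℝ (Fin d)) 2 μΩ,
      inner (𝕜 := ℝ) a P - ∫ ω, l₂ (a ω) ∂μΩ ≤ ∫ ω, conj2 d l₂ (P ω) ∂μΩ := by
    intro a
    rw [L2.inner_def, ← integral_sub (L2.integrable_inner (𝕜 := ℝ) a P) (hl2a_int a)]
    refine integral_mono ((L2.integrable_inner (𝕜 := ℝ) a P).sub (hl2a_int a)) hgP_int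
      fun ω => ?_
    exact le_ciSup (hBdd (P ω)) (a ω)
  have hbddR : BddAbove (Set.range fun a : Lp (EuclideanSpace ℝ (Fin d)) 2 μΩ =>
      inner (𝕜 := ℝ) a P - ∫ ω, l₂ (a ω) ∂μΩ) :=
    ⟨∫ ω, conj2 d l₂ (P ω) ∂μΩ, by rintro y ⟨a, rfl⟩; exact key a⟩
  -- the approximating sequence
  let b : ℕ → ℝ → EuclideanSpace ℝ (Fin d) := fun n => Nat.rec (fun _ => u 0)
    (fun n bn ω => if inner (𝕜 := ℝ) (bn ω) (P ω) - l₂ (bn ω) <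
        inner (𝕜 := ℝ) (u (n+1)) (P ω) - l₂ (u (n+1)) then u (n+1) else bn ω) n
  have hb0 : ∀ ω, b 0 ω = u 0 := fun _ => rfl
  have hbS : ∀ n ω, b (n+1) ω = if inner (𝕜 := ℝ) (b n ω) (P ω) - l₂ (b n ω) <
      inner (𝕜 := ℝ) (u (n+1)) (P ω) - l₂ (u (n+1)) then u (n+1) else b n ω := fun _ _ => rfl
  have hbmeas : ∀ n, Measurable (b n) := by
    intro n
    induction n with
    | zero => exact measurable_const
    | succ n ih =>
      have h1 : Measurable fun ω => inner (𝕜 := ℝ) (b n ω) (P ω) - l₂ (b n ω) :=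
        (ih.inner hPm).sub (hl₂.measurable.comp ih)
      have hs : MeasurableSet {ω : ℝ | inner (𝕜 := ℝ) (b n ω) (P ω) - l₂ (b n ω) <
          inner (𝕜 := ℝ) (u (n+1)) (P ω) - l₂ (u (n+1))} :=
        measurableSet_lt h1 (hφmeas (u (n+1)))
      show Measurable fun ω => if inner (𝕜 := ℝ) (b n ω) (P ω) - l₂ (b n ω) <
          inner (𝕜 := ℝ) (u (n+1)) (P ω) - l₂ (u (n+1)) then u (n+1) else b n ω
      exact Measurable.ite hs measurable_const ih
  have hbbd : ∀ n, ∃ M : ℝ, ∀ ω, ‖b n ω‖ ≤ M := by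
    intro n
    induction n with
    | zero => exact ⟨‖u 0‖, fun ω => le_refl _⟩
    | succ n ih =>
      obtain ⟨M, hM⟩ := ih
      refine ⟨max M ‖u (n+1)‖, fun ω => ?_⟩
      rw [hbS]
      split_ifs
      · exact le_max_right _ _
      · exact (hM ω).trans (le_max_left _ _)
  have hf_le : ∀ n ω, inner (𝕜 := ℝ) (b n ω) (P ω) - l₂ (b n ω) ≤ conj2 d l₂ (P ω) :=
    fun n ω => le_ciSup (hBdd (P ω)) (b n ω)
  have hf_mono : ∀ n ω, inner (𝕜 := ℝ) (b n ω) (P ω) - l₂ (b n ω) ≤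
      inner (𝕜 := ℝ) (b (n+1) ω) (P ω) - l₂ (b (n+1) ω) := by
    intro n ω
    rw [hbS]
    split_ifs with h
    · exact h.le
    · exact le_rfl
  have hf_mono' : ∀ ω, Monotone fun n => inner (𝕜 := ℝ) (b n ω) (P ω) - l₂ (b n ω) :=
    fun ω => monotone_nat_of_le_succ fun n => hf_mono n ω
  have hf_ge : ∀ n i, i ≤ n → ∀ ω, inner (𝕜 := ℝ) (u i) (P ω) - l₂ (u i) ≤
      inner (𝕜 := ℝ) (b n ω) (P ω) - l₂ (b n ω) := by
    intro n
    induction n with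
    | zero =>
      intro i hi ω
      obtain rfl : i = 0 := Nat.le_zero.mp hi
      rw [hb0]
    | succ n ih =>
      intro i hi ω
      by_cases h : i ≤ n
      · exact (ih i h ω).trans (hf_mono n ω)
      · obtain rfl : i = n + 1 := by omega
        rw [hbS]
        split_ifs with h'
        · exact le_rfl
        · exact not_lt.mp h'
  have hsup : ∀ ω, (⨆ n, (inner (𝕜 := ℝ) (b n ω) (P ω) - l₂ (b n ω))) = conj2 d l₂ (P ω) := by
    intro ω
    have hbdd2 : BddAbove (Set.range fun n =>
        inner (𝕜 := ℝ) (b n ω) (P ω) - l₂ (b n ω)) :=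
      ⟨conj2 d l₂ (P ω), by rintro y ⟨n, rfl⟩; exact hf_le n ω⟩
    refine le_antisymm (ciSup_le fun n => hf_le n ω) ?_
    rw [conj2_eq_iSup_dense l₂ C₁ C₂ C₃ hl₂ hC₂ hgrowth u hu (P ω)]
    exact ciSup_le fun i => (hf_ge i i le_rfl ω).trans (le_ciSup hbdd2 i)
  have htend : ∀ ω, Filter.Tendsto (fun n => inner (𝕜 := ℝ) (b n ω) (P ω) - l₂ (b n ω))
      Filter.atTop (nhds (conj2 d l₂ (P ω))) := by
    intro ω
    have hbdd2 : BddAbove (Set.range fun n =>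
        inner (𝕜 := ℝ) (b n ω) (P ω) - l₂ (b n ω)) :=
      ⟨conj2 d l₂ (P ω), by rintro y ⟨n, rfl⟩; exact hf_le n ω⟩
    have h := tendsto_atTop_ciSup (hf_mono' ω) hbdd2
    rwa [hsup ω] at h
  have hl2b_int : ∀ n, Integrable (fun ω => l₂ (b n ω)) μΩ := by
    intro n
    obtain ⟨M, hM⟩ := hbbd n
    have hM0 : 0 ≤ M := (norm_nonneg _).trans (hM 0)
    refine Integrable.mono' (integrable_const (C₁ + C₃ * M ^ 2))
      (hl₂.measurable.comp (hbmeas n)).aestronglyMeasurable (ae_of_all _ fun ω => ?_)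
    have h1 := (hgrowth (b n ω)).1
    have h2 := (hgrowth (b n ω)).2
    have h4 : ‖b n ω‖ ^ 2 ≤ M ^ 2 := by nlinarith [norm_nonneg (b n ω), hM ω]
    rw [Real.norm_eq_abs, abs_le]
    constructor <;> nlinarith [sq_nonneg ‖b n ω‖]
  have hinner_int : ∀ n, Integrable (fun ω => inner (𝕜 := ℝ) (b n ω) (P ω)) μΩ := by
    intro n
    obtain ⟨M, hM⟩ := hbbd n
    refine Integrable.mono' (hPnorm.const_mul M)
      ((hbmeas n).inner hPm).aestronglyMeasurable (ae_of_all _ fun ω => ?_)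
    rw [Real.norm_eq_abs]
    exact (abs_real_inner_le_norm _ _).trans
      (mul_le_mul_of_nonneg_right (hM ω) (norm_nonneg _))
  have hfn_int : ∀ n,
      Integrable (fun ω => inner (𝕜 := ℝ) (b n ω) (P ω) - l₂ (b n ω)) μΩ :=
    fun n => (hinner_int n).sub (hl2b_int n)
  have hmemLp : ∀ n, MemLp (b n) 2 μΩ := by
    intro n
    obtain ⟨M, hM⟩ := hbbd n
    exact MemLp.of_bound (hbmeas n).aestronglyMeasurable M (ae_of_all _ hM)
  have hterm : ∀ n, inner (𝕜 := ℝ) ((hmemLp n).toLp (b n)) P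
      - ∫ ω, l₂ ((((hmemLp n).toLp (b n)) : Lp (EuclideanSpace ℝ (Fin d)) 2 μΩ) ω) ∂μΩ
      = ∫ ω, (inner (𝕜 := ℝ) (b n ω) (P ω) - l₂ (b n ω)) ∂μΩ := by
    intro n
    have hA := (hmemLp n).coeFn_toLp
    have e1 : inner (𝕜 := ℝ) ((hmemLp n).toLp (b n)) P
        = ∫ ω, inner (𝕜 := ℝ) (b n ω) (P ω) ∂μΩ := by
      rw [L2.inner_def]
      refine integral_congr_ae ?_
      filter_upwards [hA] with ω hω
      rw [hω]
    have e2 : ∫ ω, l₂ ((((hmemLp n).toLp (b n)) : Lp (EuclideanSpace ℝ (Fin d)) 2 μΩ) ω) ∂μΩ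
        = ∫ ω, l₂ (b n ω) ∂μΩ := by
      refine integral_congr_ae ?_
      filter_upwards [hA] with ω hω
      rw [hω]
    rw [e1, e2, ← integral_sub (hinner_int n) (hl2b_int n)]
  show (∫ ω, conj2 d l₂ (P ω) ∂μΩ) = ⨆ a : Lp (EuclideanSpace ℝ (Fin d)) 2 μΩ,
      (inner (𝕜 := ℝ) a P - ∫ ω, l₂ (a ω) ∂μΩ)
  refine le_antisymm ?_ (ciSup_le key)
  have hIt : Filter.Tendsto
      (fun n => ∫ ω, (inner (𝕜 := ℝ) (b n ω) (P ω) - l₂ (b n ω)) ∂μΩ)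
      Filter.atTop (nhds (∫ ω, conj2 d l₂ (P ω) ∂μΩ)) :=
    integral_tendsto_of_tendsto_of_monotone hfn_int hgP_int (ae_of_all _ hf_mono')
      (ae_of_all _ htend)
  refine le_of_tendsto hIt (Filter.Eventually.of_forall fun n => ?_)
  rw [← hterm n]
  exact le_ciSup hbddR ((hmemLp n).toLp (b n))
end

section
/- Let u : H → ℝ be a function on a real Hilbert space H that is uniformly continuous, semiconcave and semiconvex with constant C, i.e., both X ↦ u(X) − C‖X‖² is concave and X ↦ u(X) + C‖X‖² is convex. Then u is Fréchet differentiable and its derivative Du is Lipschitz continuous with a constant depending only on C. -/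
open InnerProductSpace

section
variable {H : Type*} [NormedAddCommGroup H] [InnerProductSpace ℝ H]

/-- Slope monotonicity for convex functions along rays. -/
lemma convex_slope_mono' {f : H → ℝ} (hf : ConvexOn ℝ Set.univ f)
    (X v : H) {s t : ℝ} (hs : 0 < s) (hst : s ≤ t) :
    (f (X + s • v) - f X) / s ≤ (f (X + t • v) - f X) / t := by
  have ht : 0 < t := hs.trans_le hst
  set a := s / t with ha_def
  have ha : 0 ≤ a := by positivity
  have ha1 : a ≤ 1 := div_le_one_of_le₀ hst ht.le
  have hat : a * t = s := div_mul_cancel₀ s ht.ne'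
  have hcomb : (1 - a) • X + a • (X + t • v) = X + s • v := by
    rw [smul_add, smul_smul, hat]; module
  have key := hf.2 (Set.mem_univ X) (Set.mem_univ (X + t • v))
    (by linarith : (0:ℝ) ≤ 1 - a) ha (by ring)
  rw [hcomb] at key
  simp only [smul_eq_mul] at key
  have key2 : f (X + s • v) - f X ≤ a * (f (X + t • v) - f X) := by nlinarith [key]
  rw [div_le_div_iff₀ hs ht]
  calc (f (X + s • v) - f X) * t ≤ (a * (f (X + t • v) - f X)) * t :=
        mul_le_mul_of_nonneg_right key2 ht.le
    _ = (f (X + t • v) - f X) * s := by rw [mul_comm a, mul_assoc, hat]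

/-- Midpoint estimate from joint semiconvexity/semiconcavity. -/
lemma midpoint_est {u : H → ℝ} {C : ℝ}
    (hconc : ConcaveOn ℝ Set.univ (fun X => u X - C * ‖X‖ ^ 2))
    (hconv : ConvexOn ℝ Set.univ (fun X => u X + C * ‖X‖ ^ 2))
    (A B : H) :
    |u A + u B - 2 * u ((2:ℝ)⁻¹ • (A + B))| ≤ C / 2 * ‖A - B‖ ^ 2 := by
  have hmid : (2:ℝ)⁻¹ • A + (2:ℝ)⁻¹ • B = (2:ℝ)⁻¹ • (A + B) := by module
  have hpar : ‖A+B‖^2 + ‖A-B‖^2 = 2*(‖A‖^2+‖B‖^2) := by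
    have := parallelogram_law_with_norm ℝ A B
    nlinarith [this]
  have hparC : C*‖A+B‖^2 + C*‖A-B‖^2 = 2*(C*‖A‖^2+C*‖B‖^2) := by
    linear_combination C * hpar
  have hm2 : ‖(2:ℝ)⁻¹ • (A + B)‖^2 = (1/4) * ‖A+B‖^2 := by
    rw [norm_smul]; simp; ring
  have hm2C : C * ‖(2:ℝ)⁻¹ • (A + B)‖^2 = C/4 * ‖A+B‖^2 := by rw [hm2]; ring
  have h1 := hconv.2 (Set.mem_univ A) (Set.mem_univ B)
    (by norm_num : (0:ℝ) ≤ 2⁻¹) (by norm_num : (0:ℝ) ≤ 2⁻¹) (by norm_num)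
  have h2 := hconc.2 (Set.mem_univ A) (Set.mem_univ B)
    (by norm_num : (0:ℝ) ≤ 2⁻¹) (by norm_num : (0:ℝ) ≤ 2⁻¹) (by norm_num)
  rw [hmid] at h1 h2
  simp only [smul_eq_mul] at h1 h2
  rw [abs_le]
  constructor <;> linarith [h1, h2, hparC, hm2C]

end

section
variable {H : Type*} [NormedAddCommGroup H] [InnerProductSpace ℝ H]

noncomputable def qslope (u : H → ℝ) (X : H) (t : ℝ) (v : H) : ℝ :=
  (u (X + t • v) - u X) / t

noncomputable def Llim (u : H → ℝ) (C : ℝ) (X v : H) : ℝ :=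
  sInf ((fun t => qslope u X t v + C * t * ‖v‖ ^ 2) '' Set.Ioi 0)

variable {u : H → ℝ} {C : ℝ}

lemma norm_add_smul_sq (X v : H) (t : ℝ) :
    ‖X + t • v‖ ^ 2 = ‖X‖ ^ 2 + 2 * (t * inner ℝ X v) + t ^ 2 * ‖v‖ ^ 2 := by
  rw [norm_add_sq_real, real_inner_smul_right, norm_smul]
  simp [mul_pow, sq_abs]

lemma qslope_mono1 (hconv : ConvexOn ℝ Set.univ (fun X => u X + C * ‖X‖ ^ 2))
    (X v : H) {s t : ℝ} (hs : 0 < s) (hst : s ≤ t) :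
    qslope u X s v + C * s * ‖v‖ ^ 2 ≤ qslope u X t v + C * t * ‖v‖ ^ 2 := by
  have ht : 0 < t := hs.trans_le hst
  have key := convex_slope_mono' hconv X v hs hst
  rw [show (u (X + s • v) + C * ‖X + s • v‖ ^ 2 - (u X + C * ‖X‖ ^ 2)) / s
      = qslope u X s v + C * s * ‖v‖ ^ 2 + 2 * C * inner ℝ X v by
    rw [qslope, norm_add_smul_sq]; field_simp; ring] at key
  rw [show (u (X + t • v) + C * ‖X + t • v‖ ^ 2 - (u X + C * ‖X‖ ^ 2)) / t
      = qslope u X t v + C * t * ‖v‖ ^ 2 + 2 * C * inner ℝ X v by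
    rw [qslope, norm_add_smul_sq]; field_simp; ring] at key
  linarith

lemma qslope_mono2 (hconc : ConcaveOn ℝ Set.univ (fun X => u X - C * ‖X‖ ^ 2))
    (X v : H) {s t : ℝ} (hs : 0 < s) (hst : s ≤ t) :
    qslope u X t v - C * t * ‖v‖ ^ 2 ≤ qslope u X s v - C * s * ‖v‖ ^ 2 := by
  have hg : ConvexOn ℝ Set.univ (fun Z => C * ‖Z‖ ^ 2 - u Z) := by
    simpa [Pi.neg_def, neg_sub] using hconc.neg
  have ht : 0 < t := hs.trans_le hst
  have key := convex_slope_mono' hg X v hs hst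
  rw [show (C * ‖X + s • v‖ ^ 2 - u (X + s • v) - (C * ‖X‖ ^ 2 - u X)) / s
      = -(qslope u X s v) + C * s * ‖v‖ ^ 2 + 2 * C * inner ℝ X v by
    rw [qslope, norm_add_smul_sq]; field_simp; ring] at key
  rw [show (C * ‖X + t • v‖ ^ 2 - u (X + t • v) - (C * ‖X‖ ^ 2 - u X)) / t
      = -(qslope u X t v) + C * t * ‖v‖ ^ 2 + 2 * C * inner ℝ X v by
    rw [qslope, norm_add_smul_sq]; field_simp; ring] at key
  linarith

lemma qslope_two_sided (hC : 0 ≤ C)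
    (hconc : ConcaveOn ℝ Set.univ (fun X => u X - C * ‖X‖ ^ 2))
    (hconv : ConvexOn ℝ Set.univ (fun X => u X + C * ‖X‖ ^ 2))
    (X v : H) {s t : ℝ} (ht : 0 < t) (hs : 0 < s) :
    qslope u X t v - C * t * ‖v‖ ^ 2 ≤ qslope u X s v + C * s * ‖v‖ ^ 2 := by
  rcases le_total s t with h | h
  · have := qslope_mono2 hconc X v hs h
    nlinarith [mul_nonneg (mul_nonneg hC hs.le) (sq_nonneg ‖v‖)]
  · have := qslope_mono1 hconv X v ht h
    nlinarith [mul_nonneg (mul_nonneg hC ht.le) (sq_nonneg ‖v‖)]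

lemma Llim_bounds (hC : 0 ≤ C)
    (hconc : ConcaveOn ℝ Set.univ (fun X => u X - C * ‖X‖ ^ 2))
    (hconv : ConvexOn ℝ Set.univ (fun X => u X + C * ‖X‖ ^ 2))
    (X v : H) {t : ℝ} (ht : 0 < t) :
    qslope u X t v - C * t * ‖v‖ ^ 2 ≤ Llim u C X v ∧
      Llim u C X v ≤ qslope u X t v + C * t * ‖v‖ ^ 2 := by
  have hne : ((fun t => qslope u X t v + C * t * ‖v‖ ^ 2) '' Set.Ioi 0).Nonempty :=
    ⟨_, ⟨1, by norm_num, rfl⟩⟩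
  have hlb : ∀ y ∈ (fun t => qslope u X t v + C * t * ‖v‖ ^ 2) '' Set.Ioi 0,
      qslope u X t v - C * t * ‖v‖ ^ 2 ≤ y := by
    rintro y ⟨s, hs, rfl⟩
    exact qslope_two_sided hC hconc hconv X v ht hs
  constructor
  · exact le_csInf hne hlb
  · exact csInf_le ⟨_, hlb⟩ ⟨t, ht, rfl⟩

lemma master (hC : 0 ≤ C)
    (hconc : ConcaveOn ℝ Set.univ (fun X => u X - C * ‖X‖ ^ 2))
    (hconv : ConvexOn ℝ Set.univ (fun X => u X + C * ‖X‖ ^ 2))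
    (X v : H) {t : ℝ} (ht : 0 < t) :
    |u (X + t • v) - u X - t * Llim u C X v| ≤ C * t ^ 2 * ‖v‖ ^ 2 := by
  obtain ⟨h1, h2⟩ := Llim_bounds hC hconc hconv X v ht
  have hq : u (X + t • v) - u X = t * qslope u X t v := by
    rw [qslope, mul_div_cancel₀ _ ht.ne']
  rw [hq, abs_le]
  constructor <;> nlinarith [h1, h2, ht]

lemma master1 (hC : 0 ≤ C)
    (hconc : ConcaveOn ℝ Set.univ (fun X => u X - C * ‖X‖ ^ 2))
    (hconv : ConvexOn ℝ Set.univ (fun X => u X + C * ‖X‖ ^ 2))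
    (X h : H) :
    |u (X + h) - u X - Llim u C X h| ≤ C * ‖h‖ ^ 2 := by
  have := master hC hconc hconv X h one_pos
  simpa using this

end
section
variable {H : Type*} [NormedAddCommGroup H] [InnerProductSpace ℝ H]
variable {u : H → ℝ} {C : ℝ}

lemma eq_zero_of_abs_le_lin {d K : ℝ} (h : ∀ t : ℝ, 0 < t → |d| ≤ K * t) : d = 0 := by
  rcases le_or_gt K 0 with hK | hK
  · have h1 := h 1 one_pos
    have : |d| ≤ 0 := by nlinarith
    exact abs_nonpos_iff.mp this
  · by_contra hd
    have hd' : 0 < |d| := abs_pos.mpr hd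
    have h2 := h (|d| / (2 * K)) (by positivity)
    have h3 : K * (|d| / (2 * K)) = |d| / 2 := by field_simp
    rw [h3] at h2
    linarith

lemma Llim_zero (hC : 0 ≤ C)
    (hconc : ConcaveOn ℝ Set.univ (fun X => u X - C * ‖X‖ ^ 2))
    (hconv : ConvexOn ℝ Set.univ (fun X => u X + C * ‖X‖ ^ 2))
    (X : H) : Llim u C X 0 = 0 := by
  have := master1 hC hconc hconv X 0
  simp at this
  linarith [abs_nonneg (Llim u C X 0), this, neg_abs_le (Llim u C X 0), le_abs_self (Llim u C X 0)]

lemma Llim_add (hC : 0 ≤ C)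
    (hconc : ConcaveOn ℝ Set.univ (fun X => u X - C * ‖X‖ ^ 2))
    (hconv : ConvexOn ℝ Set.univ (fun X => u X + C * ‖X‖ ^ 2))
    (X a b : H) : Llim u C X (a + b) = Llim u C X a + Llim u C X b := by
  set K : ℝ := C * ‖a + b‖ ^ 2 + C * ‖a‖ ^ 2 + C * ‖b‖ ^ 2
      + (C / 2 * ‖a - b‖ ^ 2 + C / 2 * ‖a + b‖ ^ 2) with hK
  have key : ∀ t : ℝ, 0 < t →
      |Llim u C X (a + b) - Llim u C X a - Llim u C X b| ≤ K * t := by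
    intro t ht
    have b1 := master hC hconc hconv X (a + b) ht
    have b2 := master hC hconc hconv X a ht
    have b3 := master hC hconc hconv X b ht
    -- midpoint estimates
    have m1 := midpoint_est hconc hconv (X + t • a) (X + t • b)
    have m2 := midpoint_est hconc hconv (X + t • (a + b)) X
    have hmideq : (2:ℝ)⁻¹ • (X + t • a + (X + t • b))
        = (2:ℝ)⁻¹ • (X + t • (a + b) + X) := by module
    rw [hmideq] at m1
    have hn1 : ‖X + t • a - (X + t • b)‖ ^ 2 = t ^ 2 * ‖a - b‖ ^ 2 := by
      rw [show X + t • a - (X + t • b) = t • (a - b) by module, norm_smul]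
      simp [mul_pow, sq_abs]
    have hn2 : ‖X + t • (a + b) - X‖ ^ 2 = t ^ 2 * ‖a + b‖ ^ 2 := by
      rw [show X + t • (a + b) - X = t • (a + b) by module, norm_smul]
      simp [mul_pow, sq_abs]
    rw [hn1] at m1
    rw [hn2] at m2
    have b4 : |u (X + t • (a + b)) + u X - (u (X + t • a) + u (X + t • b))|
        ≤ C / 2 * (t ^ 2 * ‖a - b‖ ^ 2) + C / 2 * (t ^ 2 * ‖a + b‖ ^ 2) := by
      rw [abs_le] at m1 m2 ⊢
      constructor <;> linarith [m1.1, m1.2, m2.1, m2.2]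
    have habs : |t * (Llim u C X (a + b) - Llim u C X a - Llim u C X b)|
        ≤ (K * t) * t := by
      rw [abs_le] at b1 b2 b3 b4 ⊢
      constructor <;> (rw [hK]; linarith [b1.1, b1.2, b2.1, b2.2, b3.1, b3.2, b4.1, b4.2])
    have h5 : t * |Llim u C X (a + b) - Llim u C X a - Llim u C X b| ≤ t * (K * t) := by
      calc t * |Llim u C X (a + b) - Llim u C X a - Llim u C X b|
          = |t * (Llim u C X (a + b) - Llim u C X a - Llim u C X b)| := by
            rw [abs_mul, abs_of_pos ht]
        _ ≤ (K * t) * t := habs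
        _ = t * (K * t) := by ring
    exact le_of_mul_le_mul_left h5 ht
  have := eq_zero_of_abs_le_lin key
  linarith

lemma Llim_smul (hC : 0 ≤ C)
    (hconc : ConcaveOn ℝ Set.univ (fun X => u X - C * ‖X‖ ^ 2))
    (hconv : ConvexOn ℝ Set.univ (fun X => u X + C * ‖X‖ ^ 2))
    (X : H) (c : ℝ) (v : H) : Llim u C X (c • v) = c * Llim u C X v := by
  have hpos : ∀ (c : ℝ), 0 < c → ∀ v : H, Llim u C X (c • v) = c * Llim u C X v := by
    intro c hc v
    have key : ∀ t : ℝ, 0 < t →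
        |Llim u C X (c • v) - c * Llim u C X v| ≤ (2 * C * c ^ 2 * ‖v‖ ^ 2) * t := by
      intro t ht
      have b1 := master hC hconc hconv X (c • v) ht
      have b2 := master hC hconc hconv X v (mul_pos ht hc)
      rw [show ‖c • v‖ ^ 2 = c ^ 2 * ‖v‖ ^ 2 by rw [norm_smul]; simp [mul_pow, sq_abs]] at b1
      rw [show X + t • c • v = X + (t * c) • v by module] at b1
      have habs : |t * (Llim u C X (c • v) - c * Llim u C X v)|
          ≤ ((2 * C * c ^ 2 * ‖v‖ ^ 2) * t) * t := by
        rw [abs_le] at b1 b2 ⊢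
        constructor <;> linarith [b1.1, b1.2, b2.1, b2.2]
      have h5 : t * |Llim u C X (c • v) - c * Llim u C X v|
          ≤ t * ((2 * C * c ^ 2 * ‖v‖ ^ 2) * t) := by
        calc t * |Llim u C X (c • v) - c * Llim u C X v|
            = |t * (Llim u C X (c • v) - c * Llim u C X v)| := by
              rw [abs_mul, abs_of_pos ht]
          _ ≤ ((2 * C * c ^ 2 * ‖v‖ ^ 2) * t) * t := habs
          _ = t * ((2 * C * c ^ 2 * ‖v‖ ^ 2) * t) := by ring
      exact le_of_mul_le_mul_left h5 ht
    have := eq_zero_of_abs_le_lin key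
    linarith
  have hneg : ∀ v : H, Llim u C X (-v) = - Llim u C X v := by
    intro v
    have := Llim_add hC hconc hconv X v (-v)
    rw [add_neg_cancel, Llim_zero hC hconc hconv] at this
    linarith
  rcases lt_trichotomy c 0 with hc | hc | hc
  · have : Llim u C X (c • v) = Llim u C X ((-c) • (-v)) := by
      congr 1; module
    rw [this, hpos (-c) (by linarith) (-v), hneg]
    ring
  · subst hc; simp [Llim_zero hC hconc hconv]
  · exact hpos c hc v

lemma exists_linear_bound (hu : Continuous u) (hC : 0 ≤ C)
    (hconc : ConcaveOn ℝ Set.univ (fun X => u X - C * ‖X‖ ^ 2))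
    (hconv : ConvexOn ℝ Set.univ (fun X => u X + C * ‖X‖ ^ 2))
    (X : H) : ∃ D : H →L[ℝ] ℝ, ∀ h : H, |u (X + h) - u X - D h| ≤ C * ‖h‖ ^ 2 := by
  -- continuity bound near X
  obtain ⟨δ, hδ, hδ'⟩ := Metric.continuousAt_iff.mp (hu.continuousAt (x := X)) 1 one_pos
  set δ' : ℝ := δ / 2 with hδ'def
  have hδ'pos : 0 < δ' := by positivity
  have hsmall : ∀ h : H, ‖h‖ ≤ δ' → |u (X + h) - u X| ≤ 1 := by
    intro h hh
    have : dist (X + h) X < δ := by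
      rw [dist_eq_norm]
      simp only [add_sub_cancel_left]
      linarith
    have := hδ' this
    rw [Real.dist_eq] at this
    linarith
  -- the linear map
  set Lm : H →ₗ[ℝ] ℝ :=
    { toFun := Llim u C X
      map_add' := Llim_add hC hconc hconv X
      map_smul' := fun c v => by simpa using Llim_smul hC hconc hconv X c v } with hLm
  have hbound : ∀ v : H, ‖Lm v‖ ≤ ((1 + C * δ' ^ 2) / δ') * ‖v‖ := by
    intro v
    rcases eq_or_ne v 0 with rfl | hv
    · simp [hLm, Llim_zero hC hconc hconv]
    · have hvpos : 0 < ‖v‖ := norm_pos_iff.mpr hv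
      set t : ℝ := δ' / ‖v‖ with htdef
      have ht : 0 < t := by positivity
      have b1 := master hC hconc hconv X v ht
      have htv : ‖t • v‖ = δ' := by
        rw [norm_smul, Real.norm_eq_abs, abs_of_pos ht, htdef]
        field_simp
      have hsm := hsmall (t • v) (le_of_eq htv)
      have ht2 : C * t ^ 2 * ‖v‖ ^ 2 = C * δ' ^ 2 := by
        rw [htdef]; field_simp
      rw [ht2] at b1
      have htL : t * |Llim u C X v| ≤ 1 + C * δ' ^ 2 := by
        rw [abs_le] at b1 hsm
        rw [← abs_of_pos ht, ← abs_mul, abs_le]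
        constructor <;> linarith [b1.1, b1.2, hsm.1, hsm.2]
      have : |Llim u C X v| ≤ (1 + C * δ' ^ 2) / t := by
        rw [le_div_iff₀ ht]
        linarith [htL]
      calc ‖Lm v‖ = |Llim u C X v| := rfl
        _ ≤ (1 + C * δ' ^ 2) / t := this
        _ = ((1 + C * δ' ^ 2) / δ') * ‖v‖ := by
            rw [htdef]; field_simp
  refine ⟨LinearMap.mkContinuous Lm _ hbound, fun h => ?_⟩
  have := master1 hC hconc hconv X h
  exact this

end
section
variable {H : Type*} [NormedAddCommGroup H] [InnerProductSpace ℝ H] [CompleteSpace H]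

/-- One-sided co-coercivity estimate for a convex function with quadratic upper bounds. -/
lemma coco_asym {C : ℝ} (hCpos : 0 < C) (f : H → ℝ) (F : H → H →L[ℝ] ℝ)
    (h1 : ∀ A B : H, f A + F A (B - A) ≤ f B)
    (h2 : ∀ A B : H, f B ≤ f A + F A (B - A) + 2 * C * ‖B - A‖ ^ 2)
    (X Y : H) : F Y (X - Y) + ‖F X - F Y‖ ^ 2 / (8 * C) ≤ f X - f Y := by
  set G : H →L[ℝ] ℝ := F X - F Y with hG
  set r : H := (toDual ℝ H).symm G with hr
  have hrG : ∀ w : H, (inner ℝ r w : ℝ) = G w := fun w => toDual_symm_apply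
  have hnr : ‖r‖ = ‖G‖ := LinearIsometryEquiv.norm_map _ G
  set W : H := X - (4 * C)⁻¹ • r with hW
  have e1 := h1 Y W
  have e2 := h2 X W
  have hWX : W - X = -((4 * C)⁻¹ • r) := by rw [hW]; module
  have hFYW : F Y (W - Y) = F Y (X - Y) + F Y (W - X) := by
    rw [← map_add]; congr 1; abel
  have hGrr : G r = ‖G‖ ^ 2 := by
    rw [← hrG r, real_inner_self_eq_norm_sq, hnr]
  have hGWX : G (W - X) = -((4 * C)⁻¹ * ‖G‖ ^ 2) := by
    rw [hWX, map_neg, map_smul, smul_eq_mul, hGrr]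
  have hFXWX : F X (W - X) = F Y (W - X) + G (W - X) := by
    simp [hG, ContinuousLinearMap.sub_apply]
  have hnWX : ‖W - X‖ ^ 2 = (4 * C)⁻¹ ^ 2 * ‖G‖ ^ 2 := by
    rw [hWX, norm_neg, norm_smul, Real.norm_eq_abs,
      abs_of_pos (by positivity : (0:ℝ) < (4 * C)⁻¹), mul_pow, hnr]
  have harith : 2 * C * ((4 * C)⁻¹ ^ 2 * ‖G‖ ^ 2) - (4 * C)⁻¹ * ‖G‖ ^ 2
      = -(‖G‖ ^ 2 / (8 * C)) := by
    field_simp; ring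
  rw [hFYW] at e1
  rw [hFXWX, hGWX, hnWX] at e2
  linarith [e1, e2, harith]

/-- Co-coercivity. -/
lemma coco {C : ℝ} (hCpos : 0 < C) (f : H → ℝ) (F : H → H →L[ℝ] ℝ)
    (h1 : ∀ A B : H, f A + F A (B - A) ≤ f B)
    (h2 : ∀ A B : H, f B ≤ f A + F A (B - A) + 2 * C * ‖B - A‖ ^ 2)
    (X Y : H) : ‖F X - F Y‖ ^ 2 ≤ 4 * C * ((F X - F Y) (X - Y)) := by
  have a1 := coco_asym hCpos f F h1 h2 X Y
  have a2 := coco_asym hCpos f F h1 h2 Y X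
  rw [norm_sub_rev] at a2
  rw [show Y - X = -(X - Y) by abel, map_neg] at a2
  have hsub : (F X - F Y) (X - Y) = F X (X - Y) - F Y (X - Y) :=
    ContinuousLinearMap.sub_apply _ _ _
  have hhalf : ‖F X - F Y‖ ^ 2 / (8 * C) + ‖F X - F Y‖ ^ 2 / (8 * C)
      = ‖F X - F Y‖ ^ 2 / (4 * C) := by
    field_simp; ring
  have h6 : ‖F X - F Y‖ ^ 2 / (4 * C) ≤ F X (X - Y) - F Y (X - Y) := by linarith
  have h7 := mul_le_mul_of_nonneg_left h6 (by positivity : (0:ℝ) ≤ 4 * C)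
  have h8 : 4 * C * (‖F X - F Y‖ ^ 2 / (4 * C)) = ‖F X - F Y‖ ^ 2 := by field_simp
  rw [h8] at h7
  rw [hsub]
  linarith

end
set_option maxHeartbeats 1000000 in
/-- Lasry–Lions: A uniformly continuous function `u` on a real Hilbert
space `H` that is both semiconcave and semiconvex with constant `C` (i.e.
`X ↦ u(X) − C‖X‖²` is concave and `X ↦ u(X) + C‖X‖²` is convex) is Fréchet
differentiable with Lipschitz derivative, with Lipschitz constant depending only on
`C` (namely `2C`). -/
theorem lasry_lions_C11
    {H : Type*} [NormedAddCommGroup H] [InnerProductSpace ℝ H] [CompleteSpace H]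
    (u : H → ℝ) (hu : UniformContinuous u) (C : ℝ) (hC : 0 ≤ C)
    (hconc : ConcaveOn ℝ Set.univ (fun X => u X - C * ‖X‖ ^ 2))
    (hconv : ConvexOn ℝ Set.univ (fun X => u X + C * ‖X‖ ^ 2)) :
    ∃ u' : H → (H →L[ℝ] ℝ),
      (∀ X, HasFDerivAt u (u' X) X) ∧
      (∀ X Y, ‖u' X - u' Y‖ ≤ 2 * C * ‖X - Y‖) := by
  choose D hD using exists_linear_bound hu.continuous hC hconc hconv
  refine ⟨D, fun X => ?_, fun X Y => ?_⟩
  · -- differentiability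
    rw [hasFDerivAt_iff_isLittleO_nhds_zero, Asymptotics.isLittleO_iff]
    intro ε hε
    have hball : Metric.ball (0:H) (ε / (C + 1)) ∈ nhds (0:H) :=
      Metric.ball_mem_nhds _ (by positivity)
    filter_upwards [hball] with h hh
    rw [mem_ball_zero_iff] at hh
    have hb := hD X h
    have h1 : ‖h‖ * (C + 1) ≤ ε :=
      ((le_div_iff₀ (by positivity : (0:ℝ) < C + 1)).mp hh.le)
    have h2 := mul_le_mul_of_nonneg_right h1 (norm_nonneg h)
    rw [Real.norm_eq_abs]
    calc |u (X + h) - u X - D X h| ≤ C * ‖h‖ ^ 2 := hb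
      _ ≤ ε * ‖h‖ := by nlinarith [sq_nonneg ‖h‖, h2]
  · -- Lipschitz bound
    rcases eq_or_lt_of_le hC with hC0 | hCpos
    · -- C = 0 : u is affine and D is constant
      have hC0' : C = 0 := hC0.symm
      subst hC0'
      have hex : ∀ (A h : H), u (A + h) - u A = D A h := by
        intro A h
        have h0 : |u (A + h) - u A - D A h| ≤ 0 := by simpa using hD A h
        have := abs_nonpos_iff.mp h0
        linarith
      have hDeq : D X = D Y := by
        ext h
        have e1 := hex Y h
        have e2 := hex X (Y + h - X)
        have e3 := hex X (Y - X)
        rw [show X + (Y + h - X) = Y + h by abel] at e2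
        rw [show X + (Y - X) = Y by abel] at e3
        have e4 : D X (Y + h - X) - D X (Y - X) = D X h := by
          rw [← map_sub]; congr 1; abel
        linarith
      rw [hDeq]
      simp
    · -- C > 0 : co-coercivity argument
      set F : H → H →L[ℝ] ℝ := fun A => D A + (2 * C) • innerSL ℝ A with hF
      set Gm : H → H →L[ℝ] ℝ := fun A => (2 * C) • innerSL ℝ A - D A with hGm
      have hid : ∀ A B : H, ‖B‖ ^ 2 - ‖A‖ ^ 2 - 2 * (inner ℝ A (B - A) : ℝ) = ‖B - A‖ ^ 2 := by
        intro A B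
        rw [inner_sub_right, real_inner_self_eq_norm_sq, norm_sub_sq_real,
          real_inner_comm A B]
        ring
      have hFapp : ∀ A w : H, F A w = D A w + 2 * C * (inner ℝ A w : ℝ) := by
        intro A w
        simp [hF, ContinuousLinearMap.add_apply, ContinuousLinearMap.smul_apply,
          innerSL_apply_apply, smul_eq_mul]
      have hGapp : ∀ A w : H, Gm A w = 2 * C * (inner ℝ A w : ℝ) - D A w := by
        intro A w
        simp [hGm, ContinuousLinearMap.sub_apply, ContinuousLinearMap.smul_apply,
          innerSL_apply_apply, smul_eq_mul]
      have hDtwo : ∀ A B : H, |u B - u A - D A (B - A)| ≤ C * ‖B - A‖ ^ 2 := by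
        intro A B
        have := hD A (B - A)
        rwa [show A + (B - A) = B by abel] at this
      have hf1 : ∀ A B : H, (u A + C * ‖A‖ ^ 2) + F A (B - A) ≤ u B + C * ‖B‖ ^ 2 := by
        intro A B
        have h1 := (abs_le.mp (hDtwo A B)).1
        have h2 := hid A B
        rw [hFapp]
        nlinarith [h1, h2]
      have hf2 : ∀ A B : H, u B + C * ‖B‖ ^ 2
          ≤ (u A + C * ‖A‖ ^ 2) + F A (B - A) + 2 * C * ‖B - A‖ ^ 2 := by
        intro A B
        have h1 := (abs_le.mp (hDtwo A B)).2
        have h2 := hid A B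
        rw [hFapp]
        nlinarith [h1, h2]
      have hg1 : ∀ A B : H, (C * ‖A‖ ^ 2 - u A) + Gm A (B - A) ≤ C * ‖B‖ ^ 2 - u B := by
        intro A B
        have h1 := (abs_le.mp (hDtwo A B)).2
        have h2 := hid A B
        rw [hGapp]
        nlinarith [h1, h2]
      have hg2 : ∀ A B : H, C * ‖B‖ ^ 2 - u B
          ≤ (C * ‖A‖ ^ 2 - u A) + Gm A (B - A) + 2 * C * ‖B - A‖ ^ 2 := by
        intro A B
        have h1 := (abs_le.mp (hDtwo A B)).1
        have h2 := hid A B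
        rw [hGapp]
        nlinarith [h1, h2]
      have hco1 := coco hCpos (fun Z => u Z + C * ‖Z‖ ^ 2) F hf1 hf2 X Y
      have hco2 := coco hCpos (fun Z => C * ‖Z‖ ^ 2 - u Z) Gm hg1 hg2 X Y
      set P : H →L[ℝ] ℝ := F X - F Y with hP
      set Q : H →L[ℝ] ℝ := Gm X - Gm Y with hQ
      set p : H := (toDual ℝ H).symm P with hp
      set q : H := (toDual ℝ H).symm Q with hq
      have hnp : ‖p‖ = ‖P‖ := by rw [hp]; exact (toDual ℝ H).symm.norm_map P
      have hnq : ‖q‖ = ‖Q‖ := by rw [hq]; exact (toDual ℝ H).symm.norm_map Q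
      have hpq : p + q = (4 * C) • (X - Y) := by
        rw [hp, hq, ← map_add]
        have hPQeq : P + Q = (toDual ℝ H) ((4 * C) • (X - Y)) := by
          ext w
          rw [toDual_apply_apply, hP, hQ]
          simp only [ContinuousLinearMap.add_apply, ContinuousLinearMap.sub_apply]
          rw [hFapp, hFapp, hGapp, hGapp, real_inner_smul_left, inner_sub_left]
          ring
        rw [hPQeq, LinearIsometryEquiv.symm_apply_apply]
      have hPd : P (X - Y) = (inner ℝ p (X - Y) : ℝ) := (toDual_symm_apply).symm
      have hQd : Q (X - Y) = (inner ℝ q (X - Y) : ℝ) := (toDual_symm_apply).symm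
      have hPQd : P (X - Y) + Q (X - Y) = 4 * C * ‖X - Y‖ ^ 2 := by
        rw [hPd, hQd, ← inner_add_left, hpq, real_inner_smul_left,
          real_inner_self_eq_norm_sq]
      have hPQd4 : 4 * C * (P (X - Y)) + 4 * C * (Q (X - Y))
          = 16 * C ^ 2 * ‖X - Y‖ ^ 2 := by linear_combination (4 * C) * hPQd
      have hsum : ‖p‖ ^ 2 + ‖q‖ ^ 2 ≤ 16 * C ^ 2 * ‖X - Y‖ ^ 2 := by
        rw [hnp, hnq]
        linarith [hco1, hco2, hPQd4]
      have hnpq : ‖p + q‖ ^ 2 = 16 * C ^ 2 * ‖X - Y‖ ^ 2 := by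
        rw [hpq, norm_smul, Real.norm_eq_abs,
          abs_of_pos (by positivity : (0:ℝ) < 4 * C), mul_pow]
        ring
      have hplaw := parallelogram_law_with_norm ℝ p q
      have hpar : ‖p - q‖ ^ 2 ≤ 16 * C ^ 2 * ‖X - Y‖ ^ 2 := by
        nlinarith [hplaw, hsum, hnpq]
      have hPQ2 : P - Q = (2 : ℝ) • (D X - D Y) := by
        ext w
        simp only [ContinuousLinearMap.sub_apply, ContinuousLinearMap.smul_apply,
          smul_eq_mul]
        rw [hP, hQ]
        simp only [ContinuousLinearMap.sub_apply]
        rw [hFapp, hFapp, hGapp, hGapp]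
        ring
      have hnpmq : ‖p - q‖ = 2 * ‖D X - D Y‖ := by
        rw [hp, hq, ← map_sub, LinearIsometryEquiv.norm_map, hPQ2, norm_smul]
        simp
      rw [hnpmq] at hpar
      have hb0 : (0:ℝ) ≤ 2 * C * ‖X - Y‖ := by positivity
      nlinarith [hpar, norm_nonneg (D X - D Y), hb0,
        sq_nonneg (‖D X - D Y‖ - 2 * C * ‖X - Y‖), sq_nonneg (‖D X - D Y‖ + 2 * C * ‖X - Y‖)]
end
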